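/- Let G have vertices v_1,…,v_n, and let G_C be obtained by attaching, at each vertex v_i, t_i cycles of length r ≥ 3 (identifying v_i with one vertex of each cycle). Then HM(G_C) = HM(G) + 4 Σ_{v_i v_j ∈ E(G)} (d(v_i)+d(v_j))(t_i+t_j) + 4 Σ_{v_i v_j ∈ E(G)} (t_i+t_j)^2 + 2 Σ_i t_i d(v_i)^2 + 8 Σ_i [d(v_i) t_i^2 + d(v_i) t_i + t_i^3 + 2 t_i^2] + (16r−24) Σ_i t_i. -/

import Mathlib

open Finset

variable {V : Type*}

/-- Edge set of `G` as a `Finset`, using classical decidability. -/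
noncomputable def edgeFS [Fintype V] (G : SimpleGraph V) : Finset (Sym2 V) :=
  letI := Classical.decEq V
  letI : DecidableRel G.Adj := Classical.decRel _
  G.edgeFinset

/-- Degree of a vertex, using classical decidability. -/
noncomputable def deg [Fintype V] (G : SimpleGraph V) (v : V) : ℕ :=
  letI : DecidableRel G.Adj := Classical.decRel _
  G.degree v

/-- Sum over the edges of `G` of a symmetric integer-valued function of the endpoints. -/
noncomputable def edgeSum [Fintype V] (G : SimpleGraph V) (f : V → V → ℤ)
    (hf : ∀ u v, f u v = f v u) : ℤ :=
  ∑ e ∈ edgeFS G, Sym2.lift ⟨f, hf⟩ e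

/-- The hyper Zagreb index `HM(G) = Σ_{uv ∈ E(G)} (d(u)+d(v))²`. -/
noncomputable def hm [Fintype V] (G : SimpleGraph V) : ℕ :=
  ∑ e ∈ edgeFS G, Sym2.lift ⟨fun u v => (deg G u + deg G v) ^ 2,
    fun u v => by simp [add_comm]⟩ e

/-- The first Zagreb index `M₁(G) = Σ_v d(v)²`. -/
noncomputable def m1 [Fintype V] (G : SimpleGraph V) : ℕ :=
  ∑ v, (deg G v) ^ 2


variable {V : Type*}

/-- Type-I generalized thorn graph `G_P`: attach `t v` pendant paths of order `r`
(i.e. with `r - 1` new vertices each) at each vertex `v` of `G`,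
identifying `v` with an endpoint of each path. -/
def thornPath (G : SimpleGraph V) (t : V → ℕ) (r : ℕ) :
    SimpleGraph (V ⊕ ((Σ v : V, Fin (t v)) × Fin (r - 1))) where
  Adj x y :=
    match x, y with
    | Sum.inl u, Sum.inl v => G.Adj u v
    | Sum.inl u, Sum.inr (p, j) => p.1 = u ∧ j.val = 0
    | Sum.inr (p, j), Sum.inl u => p.1 = u ∧ j.val = 0
    | Sum.inr (p, j), Sum.inr (q, j') => p = q ∧ (j.val + 1 = j'.val ∨ j'.val + 1 = j.val)
  symm := by
    constructor
    rintro (u | ⟨p, j⟩) (v | ⟨q, j'⟩) h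
    · exact G.adj_symm h
    · exact h
    · exact h
    · exact ⟨h.1.symm, h.2.symm⟩
  loopless := by
    constructor
    rintro (u | ⟨p, j⟩) h
    · exact G.loopless.irrefl u h
    · omega

/-- Type-II generalized thorn graph `G_C`: attach `t v` cycles of length `r`
at each vertex `v` of `G`, identifying `v` with one vertex of each cycle. -/
def thornCycle (G : SimpleGraph V) (t : V → ℕ) (r : ℕ) :
    SimpleGraph (V ⊕ ((Σ v : V, Fin (t v)) × Fin (r - 1))) where
  Adj x y :=
    match x, y with
    | Sum.inl u, Sum.inl v => G.Adj u v
    | Sum.inl u, Sum.inr (p, j) => p.1 = u ∧ (j.val = 0 ∨ j.val = r - 2)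
    | Sum.inr (p, j), Sum.inl u => p.1 = u ∧ (j.val = 0 ∨ j.val = r - 2)
    | Sum.inr (p, j), Sum.inr (q, j') => p = q ∧ (j.val + 1 = j'.val ∨ j'.val + 1 = j.val)
  symm := by
    constructor
    rintro (u | ⟨p, j⟩) (v | ⟨q, j'⟩) h
    · exact G.adj_symm h
    · exact h
    · exact h
    · exact ⟨h.1.symm, h.2.symm⟩
  loopless := by
    constructor
    rintro (u | ⟨p, j⟩) h
    · exact G.loopless.irrefl u h
    · omega

/-- Type-III generalized thorn graph `G_K`: attach `t v` copies of the complete graph `K_r`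
at each vertex `v` of `G`, identifying `v` with one vertex of each copy. -/
def thornComplete (G : SimpleGraph V) (t : V → ℕ) (r : ℕ) :
    SimpleGraph (V ⊕ ((Σ v : V, Fin (t v)) × Fin (r - 1))) where
  Adj x y :=
    match x, y with
    | Sum.inl u, Sum.inl v => G.Adj u v
    | Sum.inl u, Sum.inr (p, j) => p.1 = u
    | Sum.inr (p, j), Sum.inl u => p.1 = u
    | Sum.inr (p, j), Sum.inr (q, j') => p = q ∧ j ≠ j'
  symm := by
    constructor
    rintro (u | ⟨p, j⟩) (v | ⟨q, j'⟩) h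
    · exact G.adj_symm h
    · exact h
    · exact h
    · exact ⟨h.1.symm, h.2.symm⟩
  loopless := by
    constructor
    rintro (u | ⟨p, j⟩) h
    · exact G.loopless.irrefl u h
    · exact h.2 rfl

/-- Type-IV generalized thorn graph `G_A`: attach `t v` copies of the complete bipartite
graph `K_{r,s}` at each vertex `v`, identifying `v` with one vertex of the part of size `r`. -/
def thornBipartite (G : SimpleGraph V) (t : V → ℕ) (r s : ℕ) :
    SimpleGraph (V ⊕ ((Σ v : V, Fin (t v)) × (Fin (r - 1) ⊕ Fin s))) where
  Adj x y :=
    match x, y with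
    | Sum.inl u, Sum.inl v => G.Adj u v
    | Sum.inl u, Sum.inr (p, x) => p.1 = u ∧ x.isRight
    | Sum.inr (p, x), Sum.inl u => p.1 = u ∧ x.isRight
    | Sum.inr (p, x), Sum.inr (q, y) => p = q ∧ x.isLeft ≠ y.isLeft
  symm := by
    constructor
    rintro (u | ⟨p, x⟩) (v | ⟨q, y⟩) h
    · exact G.adj_symm h
    · exact h
    · exact h
    · exact ⟨h.1.symm, h.2.symm⟩
  loopless := by
    constructor
    rintro (u | ⟨p, x⟩) h
    · exact G.loopless.irrefl u h
    · exact h.2 rfl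

/-- Type-V generalized thorn graph `G_{C'}`: join `t v` disjoint copies of the cycle `C_r`
to each vertex `v` of `G`, each by a new bridge edge. -/
def joinedCycle (G : SimpleGraph V) (t : V → ℕ) (r : ℕ) :
    SimpleGraph (V ⊕ ((Σ v : V, Fin (t v)) × Fin r)) where
  Adj x y :=
    match x, y with
    | Sum.inl u, Sum.inl v => G.Adj u v
    | Sum.inl u, Sum.inr (p, j) => p.1 = u ∧ j.val = 0
    | Sum.inr (p, j), Sum.inl u => p.1 = u ∧ j.val = 0
    | Sum.inr (p, j), Sum.inr (q, j') =>
        p = q ∧ j ≠ j' ∧ ((j.val + 1) % r = j'.val ∨ (j'.val + 1) % r = j.val)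
  symm := by
    constructor
    rintro (u | ⟨p, j⟩) (v | ⟨q, j'⟩) h
    · exact G.adj_symm h
    · exact h
    · exact h
    · exact ⟨h.1.symm, h.2.1.symm, h.2.2.symm⟩
  loopless := by
    constructor
    rintro (u | ⟨p, j⟩) h
    · exact G.loopless.irrefl u h
    · exact h.2.1 rfl

/-- Type-VI generalized thorn graph `G_{K'}`: join `t v` disjoint copies of the complete
graph `K_r` to each vertex `v` of `G`, each by a new bridge edge. -/
def joinedComplete (G : SimpleGraph V) (t : V → ℕ) (r : ℕ) :
    SimpleGraph (V ⊕ ((Σ v : V, Fin (t v)) × Fin r)) where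
  Adj x y :=
    match x, y with
    | Sum.inl u, Sum.inl v => G.Adj u v
    | Sum.inl u, Sum.inr (p, j) => p.1 = u ∧ j.val = 0
    | Sum.inr (p, j), Sum.inl u => p.1 = u ∧ j.val = 0
    | Sum.inr (p, j), Sum.inr (q, j') => p = q ∧ j ≠ j'
  symm := by
    constructor
    rintro (u | ⟨p, j⟩) (v | ⟨q, j'⟩) h
    · exact G.adj_symm h
    · exact h
    · exact h
    · exact ⟨h.1.symm, h.2.symm⟩
  loopless := by
    constructor
    rintro (u | ⟨p, j⟩) h
    · exact G.loopless.irrefl u h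
    · exact h.2 rfl

/-!
Count ordered adjacent pairs: `2 HM(H) = Σ_{x ~ y} (d x + d y)²`. In `G_C` an old vertex `v` has
degree `d(v) + 2 t_v` and every cycle vertex has degree 2. The old–old pairs expand into the three
edge sums over `G`; at each `v` there are `2 t_v` old–new pairs, each counted in both orders and
contributing `(d(v) + 2 t_v + 2)²`; each cycle has `2 (r - 2)` ordered new–new pairs, contributing
`16` each.
-/

open SimpleGraph

section ClassicalInstances

variable {W : Type*} [Fintype W] (H : SimpleGraph W) [DecidableRel H.Adj]

theorem edgeFS_eq_edgeFinset : edgeFS H = H.edgeFinset := by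
  classical
  ext e
  simp [edgeFS]

theorem deg_eq_degree (v : W) : deg H v = H.degree v := by
  unfold deg
  congr!

theorem deg_eq_sum_ite (v : W) : (deg H v : ℤ) = ∑ w, if H.Adj v w then 1 else 0 := by
  rw [deg_eq_degree, ← H.card_neighborFinset_eq_degree, H.neighborFinset_eq_filter,
    card_filter, Nat.cast_sum]
  simp only [Nat.cast_ite, Nat.cast_one, Nat.cast_zero]

theorem two_mul_sum_edgeFinset_lift {R : Type*} [Semiring R] (f : W → W → R)
    (hf : ∀ u v, f u v = f v u) :
    2 * ∑ e ∈ H.edgeFinset, Sym2.lift ⟨f, hf⟩ e =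
      ∑ u, ∑ v, if H.Adj u v then f u v else 0 := by
  classical
  calc 2 * ∑ e ∈ H.edgeFinset, Sym2.lift ⟨f, hf⟩ e
      = ∑ e ∈ H.edgeFinset, ∑ d ∈ univ.filter (fun d : H.Dart => d.edge = e),
          Sym2.lift ⟨f, hf⟩ d.edge := by
        rw [mul_sum]
        refine sum_congr rfl fun e he => ?_
        rw [sum_congr rfl fun d hd => by rw [(mem_filter.mp hd).2], sum_const,
          H.dart_edge_fiber_card e (H.mem_edgeFinset.mp he), two_nsmul, two_mul]
    _ = ∑ d : H.Dart, f d.fst d.snd :=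
        sum_fiberwise_of_maps_to (fun d _ => H.mem_edgeFinset.mpr d.edge_mem) _
    _ = ∑ p ∈ univ.filter (fun p : W × W => H.Adj p.1 p.2), f p.1 p.2 :=
        sum_bij' (fun d _ => d.toProd) (fun p hp => ⟨p, (mem_filter.mp hp).2⟩)
          (by simp) (by simp) (by simp) (by simp) (by simp)
    _ = ∑ u, ∑ v, if H.Adj u v then f u v else 0 := by
        rw [sum_filter, ← univ_product_univ, sum_product]

theorem two_mul_edgeSum (f : W → W → ℤ) (hf : ∀ u v, f u v = f v u) :
    2 * edgeSum H f hf = ∑ u, ∑ v, if H.Adj u v then f u v else 0 := by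
  rw [edgeSum, edgeFS_eq_edgeFinset, two_mul_sum_edgeFinset_lift]

theorem two_mul_hm :
    2 * (hm H : ℤ) = ∑ u, ∑ v, if H.Adj u v then ((deg H u : ℤ) + deg H v) ^ 2 else 0 := by
  rw [hm, edgeFS_eq_edgeFinset, Nat.cast_sum, ← two_mul_sum_edgeFinset_lift H _ (by intros; ring)]
  congr 1
  refine sum_congr rfl fun e _ => ?_
  induction e with
  | h u v => simp only [Sym2.lift_mk]; push_cast; rfl

end ClassicalInstances

theorem sum_adj_sum_type {α β R : Type*} [Fintype α] [Fintype β] [Semiring R]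
    (H : SimpleGraph (α ⊕ β)) [DecidableRel H.Adj] (f : α ⊕ β → α ⊕ β → R)
    (hf : ∀ x y, f x y = f y x) :
    ∑ x, ∑ y, (if H.Adj x y then f x y else 0) =
      ∑ a, ∑ a', (if H.Adj (.inl a) (.inl a') then f (.inl a) (.inl a') else 0)
      + 2 * ∑ a, ∑ b, (if H.Adj (.inl a) (.inr b) then f (.inl a) (.inr b) else 0)
      + ∑ b, ∑ b', (if H.Adj (.inr b) (.inr b') then f (.inr b) (.inr b') else 0) := by
  have hswap : ∑ b, ∑ a, (if H.Adj (.inr b) (.inl a) then f (.inr b) (.inl a) else 0) =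
      ∑ a, ∑ b, (if H.Adj (.inl a) (.inr b) then f (.inl a) (.inr b) else 0) := by
    rw [sum_comm]
    simp only [H.adj_comm (.inr _), hf (.inr _)]
  simp only [Fintype.sum_sum_type, sum_add_distrib, hswap]
  rw [two_mul]
  abel

theorem sum_sigma_fin_fst {V R : Type*} [Fintype V] [Semiring R] (t : V → ℕ) (F : V → R) :
    ∑ p : Σ v, Fin (t v), F p.1 = ∑ v, (t v : R) * F v := by
  rw [← univ_sigma_univ, sum_sigma]
  simp

section PathEnds

variable {r : ℕ}

theorem sum_ite_pathEnd {R : Type*} [Semiring R] (hr : 3 ≤ r) (c : R) :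
    ∑ j : Fin (r - 1), (if j.val = 0 ∨ j.val = r - 2 then c else 0) = 2 * c := by
  rw [Fin.sum_univ_eq_sum_range (fun k => if k = 0 ∨ k = r - 2 then c else 0), ← sum_filter]
  have hends : (range (r - 1)).filter (fun k => k = 0 ∨ k = r - 2) = {0, r - 2} := by
    ext k
    simp only [mem_filter, mem_range, mem_insert, mem_singleton]
    omega
  rw [hends, sum_pair (by omega), two_mul]

theorem ite_pathEnd_add_sum_ite_pathAdj (hr : 3 ≤ r) (j : Fin (r - 1)) :
    (if j.val = 0 ∨ j.val = r - 2 then 1 else 0)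
      + ∑ k : Fin (r - 1), (if j.val + 1 = k.val ∨ k.val + 1 = j.val then 1 else 0) =
      (2 : ℤ) := by
  have hj := j.isLt
  rw [Fin.sum_univ_eq_sum_range (fun k => if j.val + 1 = k ∨ k + 1 = j.val then (1 : ℤ) else 0)]
  have hsplit : ∀ k, (if j.val + 1 = k ∨ k + 1 = j.val then (1 : ℤ) else 0) =
      (if k = j.val + 1 then 1 else 0) +
        (if k = j.val - 1 then (if 1 ≤ j.val then 1 else 0) else 0) := by
    intro k
    split_ifs <;> omega
  rw [sum_congr rfl fun k _ => hsplit k, sum_add_distrib, sum_ite_eq', sum_ite_eq']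
  simp only [mem_range]
  split_ifs <;> omega

end PathEnds

section ThornCycle

variable {G : SimpleGraph V} {t : V → ℕ} {r : ℕ}

@[simp]
theorem thornCycle_adj_inl_inl {u v : V} :
    (thornCycle G t r).Adj (.inl u) (.inl v) ↔ G.Adj u v := Iff.rfl

@[simp]
theorem thornCycle_adj_inl_inr {u : V} {p : Σ v, Fin (t v)} {j : Fin (r - 1)} :
    (thornCycle G t r).Adj (.inl u) (.inr (p, j)) ↔ p.1 = u ∧ (j.val = 0 ∨ j.val = r - 2) :=
  Iff.rfl

@[simp]
theorem thornCycle_adj_inr_inl {u : V} {p : Σ v, Fin (t v)} {j : Fin (r - 1)} :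
    (thornCycle G t r).Adj (.inr (p, j)) (.inl u) ↔ p.1 = u ∧ (j.val = 0 ∨ j.val = r - 2) :=
  Iff.rfl

@[simp]
theorem thornCycle_adj_inr_inr {p q : Σ v, Fin (t v)} {j k : Fin (r - 1)} :
    (thornCycle G t r).Adj (.inr (p, j)) (.inr (q, k)) ↔
      p = q ∧ (j.val + 1 = k.val ∨ k.val + 1 = j.val) :=
  Iff.rfl

variable [Fintype V] [DecidableEq V] [DecidableRel (thornCycle G t r).Adj]

theorem sum_ite_thornCycle_adj_inl_inr {R : Type*} [CommSemiring R] (hr : 3 ≤ r) (u : V)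
    (c : R) :
    ∑ w, (if (thornCycle G t r).Adj (.inl u) (.inr w) then c else 0) = 2 * t u * c := by
  simp only [Fintype.sum_prod_type, thornCycle_adj_inl_inr, ite_and, sum_ite_irrel,
    sum_ite_pathEnd hr, sum_const_zero]
  rw [sum_sigma_fin_fst t (fun v => if v = u then 2 * c else 0)]
  simp only [mul_ite, mul_zero, Fintype.sum_ite_eq']
  ring

theorem sum_ite_thornCycle_adj_inr_inl (w : (Σ v, Fin (t v)) × Fin (r - 1)) :
    ∑ u, (if (thornCycle G t r).Adj (.inr w) (.inl u) then 1 else 0) =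
      if w.2.val = 0 ∨ w.2.val = r - 2 then (1 : ℤ) else 0 := by
  obtain ⟨p, j⟩ := w
  simp only [thornCycle_adj_inr_inl, ite_and, Fintype.sum_ite_eq]

theorem sum_ite_thornCycle_adj_inr_inr (w : (Σ v, Fin (t v)) × Fin (r - 1)) :
    ∑ w', (if (thornCycle G t r).Adj (.inr w) (.inr w') then 1 else 0) =
      ∑ k : Fin (r - 1),
        (if w.2.val + 1 = k.val ∨ k.val + 1 = w.2.val then (1 : ℤ) else 0) := by
  obtain ⟨p, j⟩ := w
  simp only [Fintype.sum_prod_type, thornCycle_adj_inr_inr, ite_and, sum_ite_irrel,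
    sum_const_zero, Fintype.sum_ite_eq]

theorem deg_thornCycle_inl (hr : 3 ≤ r) (u : V) :
    (deg (thornCycle G t r) (.inl u) : ℤ) = deg G u + 2 * t u := by
  classical
  rw [deg_eq_sum_ite, Fintype.sum_sum_type, sum_ite_thornCycle_adj_inl_inr (G := G) hr,
    deg_eq_sum_ite G]
  simp only [thornCycle_adj_inl_inl, mul_one]

theorem deg_thornCycle_inr (hr : 3 ≤ r) (w : (Σ v, Fin (t v)) × Fin (r - 1)) :
    (deg (thornCycle G t r) (.inr w) : ℤ) = 2 := by
  rw [deg_eq_sum_ite, Fintype.sum_sum_type, sum_ite_thornCycle_adj_inr_inl (G := G),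
    sum_ite_thornCycle_adj_inr_inr, ite_pathEnd_add_sum_ite_pathAdj hr]

theorem sum_sum_ite_thornCycle_adj_inr_inr (hr : 3 ≤ r) (c : ℤ) :
    ∑ w, ∑ w', (if (thornCycle G t r).Adj (.inr w) (.inr w') then c else 0) =
      2 * ((r : ℤ) - 2) * (∑ v, (t v : ℤ)) * c := by
  have hrow : ∀ w : (Σ v, Fin (t v)) × Fin (r - 1),
      ∑ w', (if (thornCycle G t r).Adj (.inr w) (.inr w') then c else 0) =
        c * (2 - if w.2.val = 0 ∨ w.2.val = r - 2 then 1 else 0) := by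
    intro w
    rw [← eq_sub_of_add_eq' (ite_pathEnd_add_sum_ite_pathAdj hr w.2),
      ← sum_ite_thornCycle_adj_inr_inr (G := G), mul_sum]
    simp only [mul_ite, mul_one, mul_zero]
  have hr1 : ((r - 1 : ℕ) : ℤ) = r - 1 := by omega
  simp only [hrow, ← mul_sum, sum_sub_distrib, Fintype.sum_prod_type, sum_ite_pathEnd hr,
    sum_const, card_univ, nsmul_eq_mul, Fintype.card_prod, Fintype.card_sigma, Fintype.card_fin]
  push_cast [hr1]
  ring

end ThornCycle

theorem hyperZagreb_thornCycle {V : Type*} [Fintype V] (G : SimpleGraph V)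
    (t : V → ℕ) (r : ℕ) (hr : 3 ≤ r) :
    (hm (thornCycle G t r) : ℤ) =
      hm G
      + 4 * edgeSum G (fun u v => ((deg G u : ℤ) + deg G v) * ((t u : ℤ) + t v))
      (by intro u v; ring)
      + 4 * edgeSum G (fun u v => ((t u : ℤ) + t v) ^ 2)
      (by intro u v; ring)
      + 2 * ∑ i : V, (t i : ℤ) * (deg G i : ℤ) ^ 2
      + 8 * ∑ i : V, ((deg G i : ℤ) * (t i : ℤ) ^ 2 + (deg G i : ℤ) * (t i : ℤ)
          + (t i : ℤ) ^ 3 + 2 * (t i : ℤ) ^ 2)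
      + (16 * (r : ℤ) - 24) * ∑ i : V, (t i : ℤ) := by
  classical
  have hthorn := two_mul_hm (thornCycle G t r)
  rw [sum_adj_sum_type _ _ fun _ _ => by ring] at hthorn
  simp only [thornCycle_adj_inl_inl, deg_thornCycle_inl hr, deg_thornCycle_inr hr,
    sum_ite_thornCycle_adj_inl_inr hr, sum_sum_ite_thornCycle_adj_inr_inr hr] at hthorn
  have hbase : ∑ u, ∑ v, (if G.Adj u v then
        ((deg G u : ℤ) + 2 * t u + ((deg G v : ℤ) + 2 * t v)) ^ 2 else 0) =
      2 * (hm G : ℤ)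
      + 4 * (2 * edgeSum G (fun u v => ((deg G u : ℤ) + deg G v) * ((t u : ℤ) + t v))
        (by intro u v; ring))
      + 4 * (2 * edgeSum G (fun u v => ((t u : ℤ) + t v) ^ 2) (by intro u v; ring)) := by
    rw [two_mul_hm, two_mul_edgeSum, two_mul_edgeSum]
    simp only [mul_sum, ← sum_add_distrib]
    refine sum_congr rfl fun u _ => sum_congr rfl fun v _ => ?_
    split_ifs <;> ring
  have hvertex : 2 * ∑ a, 2 * (t a : ℤ) * ((deg G a : ℤ) + 2 * t a + 2) ^ 2
      + 2 * ((r : ℤ) - 2) * (∑ v, (t v : ℤ)) * ((2 : ℤ) + 2) ^ 2 =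
      2 * (2 * ∑ i : V, (t i : ℤ) * (deg G i : ℤ) ^ 2
        + 8 * ∑ i : V, ((deg G i : ℤ) * (t i : ℤ) ^ 2 + (deg G i : ℤ) * (t i : ℤ)
          + (t i : ℤ) ^ 3 + 2 * (t i : ℤ) ^ 2)
        + (16 * (r : ℤ) - 24) * ∑ i : V, (t i : ℤ)) := by
    simp only [mul_sum, sum_mul, ← sum_add_distrib]
    exact sum_congr rfl fun v _ => by ring
  refine mul_left_cancel₀ two_ne_zero ?_
  linear_combination hthorn + hbase + hvertex
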